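/- arXiv:2605.09649 — 2 statements merged into one kernel-verified Lean document; each statement's English description precedes it below -/
import Mathlib

section
/- Let C be a finite nonempty index set, U ⊆ C nonempty, and z : C → ℝ logits. Suppose there exist Δ ≥ 0 and a subset D' ⊆ C \ U such that z(d) ≥ max_{i∈U} z(i) − Δ for all d ∈ D'. Then the attention dilution δ := 1 − (∑_{i∈U} exp(z i)) / (∑_{j∈C} exp(z j)) satisfies δ ≥ (exp(−Δ)·|D'|/|U|) / (1 + exp(−Δ)·|D'|/|U|). -/
open Finset

/-- Near-tie distractors force dilution. -/
theorem near_tie_distractors_force_dilution {ι : Type*} [DecidableEq ι]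
    (C U D' : Finset ι) (hU : U.Nonempty) (hUC : U ⊆ C) (hD : D' ⊆ C \ U)
    (z : ι → ℝ) (Δ : ℝ) (hΔ : 0 ≤ Δ)
    (hnear : ∀ d ∈ D', z d ≥ U.sup' hU z - Δ) :
    1 - (∑ i ∈ U, Real.exp (z i)) / (∑ j ∈ C, Real.exp (z j)) ≥
      (Real.exp (-Δ) * D'.card / U.card) /
        (1 + Real.exp (-Δ) * D'.card / U.card) := by
  set M := U.sup' hU z with hM
  set SU := ∑ i ∈ U, Real.exp (z i) with hSU
  set SD := ∑ i ∈ D', Real.exp (z i) with hSD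
  set SC := ∑ j ∈ C, Real.exp (z j) with hSC
  set r := Real.exp (-Δ) * D'.card / U.card with hr
  have hUcard : (0:ℝ) < U.card := by exact_mod_cast card_pos.mpr hU
  have hr0 : 0 ≤ r := by positivity
  have hSUpos : 0 < SU := Finset.sum_pos (fun i _ => Real.exp_pos _) hU
  -- SU ≤ |U| * exp M
  have hSUle : SU ≤ U.card * Real.exp M := by
    calc SU ≤ ∑ _i ∈ U, Real.exp M := by
          apply Finset.sum_le_sum
          intro i hi
          exact Real.exp_le_exp.mpr (Finset.le_sup' z hi)
      _ = U.card * Real.exp M := by simp [mul_comm]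
  -- SD ≥ |D'| * exp (M - Δ)
  have hSDge : (D'.card : ℝ) * Real.exp (M - Δ) ≤ SD := by
    calc (D'.card : ℝ) * Real.exp (M - Δ) = ∑ _i ∈ D', Real.exp (M - Δ) := by
          simp [mul_comm]
      _ ≤ SD := Finset.sum_le_sum (fun d hd => Real.exp_le_exp.mpr (hnear d hd))
  have hrSU : r * SU ≤ SD := by
    calc r * SU ≤ r * (U.card * Real.exp M) := by
          exact mul_le_mul_of_nonneg_left hSUle hr0
      _ = (D'.card : ℝ) * Real.exp (M - Δ) := by
          rw [hr]
          field_simp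
          rw [Real.exp_sub, Real.exp_neg]
          ring
      _ ≤ SD := hSDge
  -- SC ≥ SU + SD
  have hdisj : Disjoint U D' := by
    refine Finset.disjoint_left.mpr ?_
    intro a ha haD
    exact (Finset.mem_sdiff.mp (hD haD)).2 ha
  have hsub : U ∪ D' ⊆ C := by
    apply Finset.union_subset hUC
    exact hD.trans (Finset.sdiff_subset)
  have hSCge : SU + SD ≤ SC := by
    rw [hSU, hSD, hSC, ← Finset.sum_union hdisj]
    exact Finset.sum_le_sum_of_subset_of_nonneg hsub (fun i _ _ => (Real.exp_pos _).le)
  have hSCpos : 0 < SC := lt_of_lt_of_le (by nlinarith) hSCge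
  have key : (1 + r) * SU ≤ SC := by nlinarith
  have h1 : SU / SC ≤ 1 / (1 + r) := by
    rw [div_le_div_iff₀ hSCpos (by linarith)]
    nlinarith
  have : r / (1 + r) = 1 - 1 / (1 + r) := by
    field_simp
    ring
  rw [ge_iff_le, this]
  linarith
end

section
/- Let C be finite, U ⊆ C nonempty with C \ U nonempty, z : C → ℝ, and retention weights r : C → [0,1]. Define the retention-gated attention α^r_i = r_i·exp(z_i)/∑_{j∈C} r_j·exp(z_j) (assume the denominator is positive), the dilutions δ = 1 − ∑_{i∈U} exp(z_i)/∑_{j∈C} exp(z_j) and δ^r = 1 − ∑_{i∈U} α^r_i, and the logit-weighted retention rates ρ_U = ∑_{i∈U} r_i exp(z_i) / ∑_{i∈U} exp(z_i) and ρ_D = ∑_{i∉U} r_i exp(z_i) / ∑_{i∉U} exp(z_i). If ρ_U > 0, then δ^r = (ρ_D/ρ_U)·δ / ((1 − δ) + (ρ_D/ρ_U)·δ). -/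
open Finset

/-- Exact identity for the dilution under retention-gated attention. -/
theorem retention_dilution_identity {ι : Type*} [DecidableEq ι]
    (C U : Finset ι) (hU : U.Nonempty) (hUC : U ⊆ C) (hDne : (C \ U).Nonempty)
    (z : ι → ℝ) (r : ι → ℝ) (hr : ∀ i, r i ∈ Set.Icc (0 : ℝ) 1)
    (hden : 0 < ∑ j ∈ C, r j * Real.exp (z j))
    (ρU ρD δ δr : ℝ)
    (hρU : ρU = (∑ i ∈ U, r i * Real.exp (z i)) / (∑ i ∈ U, Real.exp (z i)))
    (hρD : ρD = (∑ i ∈ C \ U, r i * Real.exp (z i)) / (∑ i ∈ C \ U, Real.exp (z i)))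
    (hδ : δ = 1 - (∑ i ∈ U, Real.exp (z i)) / (∑ j ∈ C, Real.exp (z j)))
    (hδr : δr = 1 - (∑ i ∈ U, r i * Real.exp (z i)) / (∑ j ∈ C, r j * Real.exp (z j)))
    (hρUpos : 0 < ρU) :
    δr = (ρD / ρU) * δ / ((1 - δ) + (ρD / ρU) * δ) := by
  set SU := ∑ i ∈ U, Real.exp (z i) with hSU
  set SD := ∑ i ∈ C \ U, Real.exp (z i) with hSD
  set RU := ∑ i ∈ U, r i * Real.exp (z i) with hRU
  set RD := ∑ i ∈ C \ U, r i * Real.exp (z i) with hRD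
  have hSUpos : 0 < SU := Finset.sum_pos (fun i _ => Real.exp_pos _) hU
  have hSDpos : 0 < SD := Finset.sum_pos (fun i _ => Real.exp_pos _) hDne
  have hCsplit : (∑ j ∈ C, Real.exp (z j)) = SU + SD := by
    rw [hSU, hSD, ← Finset.sum_sdiff hUC]; ring
  have hCsplit' : (∑ j ∈ C, r j * Real.exp (z j)) = RU + RD := by
    rw [hRU, hRD, ← Finset.sum_sdiff hUC]; ring
  have hRUpos : 0 < RU := by
    have h := hρUpos
    rw [hρU] at h
    exact (div_pos_iff.mp h).resolve_right (fun ⟨_, hs⟩ => absurd hSUpos (not_lt.mpr hs.le)) |>.1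
  have hRDnonneg : 0 ≤ RD := Finset.sum_nonneg fun i _ =>
    mul_nonneg (hr i).1 (Real.exp_pos _).le
  have hRsum : 0 < RU + RD := by positivity
  subst hρU hρD hδ hδr
  rw [hCsplit, hCsplit']
  have h1 : SU + SD ≠ 0 := by positivity
  have h2 : RU + RD ≠ 0 := hRsum.ne'
  have h3 : SU ≠ 0 := hSUpos.ne'
  have h4 : SD ≠ 0 := hSDpos.ne'
  field_simp
  have hX : RU * SU * SD + RD * SU * SD ≠ 0 := by positivity
  ring_nf
  rw [← add_mul, ← div_eq_mul_inv, eq_div_iff hX]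
  ring
end
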